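/- Joint cooperation: For every hybrid game α and all sets of states X, Y ⊆ S, the players can both win exactly when the coalition can win the systematized game: ς_α(X,Y) ∩ δ_α(X,Y) = ς_{α^{-d}}(X ∩ Y), where the right-hand side is the one-argument zero-sum dGL winning region. -/
import Mathlib


open Set

/-- Hybrid games over a variable set `V`. Terms/ODE right-hand sides are
interpreted as functions from states `V → ℝ` to `ℝ`; tests and evolution
domain constraints are sets of states. -/
inductive Game (V : Type*) where
  | assign (x : V) (e : (V → ℝ) → ℝ)
  | ode (x : V) (f : (V → ℝ) → ℝ) (Q : Set (V → ℝ))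
  | test (Q : Set (V → ℝ))
  | choice (a b : Game V)
  | seq (a b : Game V)
  | dual (a : Game V)
  | star (a : Game V)

variable {V : Type*} [DecidableEq V]

/-- `φ : ℝ → (V → ℝ)` (restricted to `[0,r]`) is a solution of `x' = f(x) & Q`
of duration `r ≥ 0`: `t ↦ φ t x` is differentiable with derivative `f (φ s)`
at each `s ∈ [0,r]`, `φ s ∈ Q` on `[0,r]`, and all other variables stay
constant along `φ`. -/
def IsSolution (x : V) (f : (V → ℝ) → ℝ) (Q : Set (V → ℝ)) (r : ℝ)
    (φ : ℝ → (V → ℝ)) : Prop :=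
  0 ≤ r ∧
  (∀ s ∈ Set.Icc 0 r, HasDerivAt (fun t => φ t x) (f (φ s)) s) ∧
  (∀ s ∈ Set.Icc 0 r, φ s ∈ Q) ∧
  (∀ s ∈ Set.Icc 0 r, ∀ y, y ≠ x → φ s y = φ 0 y)

mutual
/-- Angel's semi-competitive winning region ς_α(X,Y). -/
def angel : Game V → Set (V → ℝ) → Set (V → ℝ) → Set (V → ℝ)
  | .assign x e, X, _ => {ω | Function.update ω x (e ω) ∈ X}
  | .ode x f Q, X, _ =>
      {ω | ∃ r φ, IsSolution x f Q r φ ∧ φ 0 = ω ∧ φ r ∈ X}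
  | .test Q, X, _ => Q ∩ X
  | .choice a b, X, Y => angel a X Y ∪ angel b X Y
  | .seq a b, X, Y => angel a (angel b X Y) (demon b X Y)
  | .dual a, X, Y => demon a Y X
  | .star a, X, Y =>
      ⋂₀ {Z | X ∪ angel a Z Zᶜ ⊆ Z} ∪
      ⋂₀ {Z | (X ∩ Y) ∪ (angel a Z Z ∩ demon a Z Z) ⊆ Z}

/-- Demon's semi-competitive winning region δ_α(X,Y). -/
def demon : Game V → Set (V → ℝ) → Set (V → ℝ) → Set (V → ℝ)
  | .assign x e, _, Y => {ω | Function.update ω x (e ω) ∈ Y}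
  | .ode x f Q, X, Y =>
      {ω | ∀ r φ, IsSolution x f Q r φ → φ 0 = ω → ∀ s ∈ Set.Icc 0 r, φ s ∈ Y} ∪
      {ω | ∃ r φ, IsSolution x f Q r φ ∧ φ 0 = ω ∧ ∃ s ∈ Set.Icc 0 r, φ s ∈ X ∩ Y}
  | .test Q, _, Y => Qᶜ ∪ Y
  | .choice a b, X, Y =>
      (demon a X Y ∩ demon b X Y) ∪ (demon a X Y ∩ angel a X Y) ∪
      (demon b X Y ∩ angel b X Y)
  | .seq a b, X, Y => demon a (angel b X Y) (demon b X Y)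
  | .dual a, X, Y => angel a Y X
  | .star a, X, Y =>
      ⋃₀ {Z | Z ⊆ Y ∩ demon a Zᶜ Z} ∪
      ⋂₀ {Z | (X ∩ Y) ∪ (angel a Z Z ∩ demon a Z Z) ⊆ Z}
end

/-- Angel's one-argument zero-sum dGL winning region ς_α(X). -/
def dglAngel : Game V → Set (V → ℝ) → Set (V → ℝ)
  | .assign x e, X => {ω | Function.update ω x (e ω) ∈ X}
  | .ode x f Q, X => {ω | ∃ r φ, IsSolution x f Q r φ ∧ φ 0 = ω ∧ φ r ∈ X}
  | .test Q, X => Q ∩ X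
  | .choice a b, X => dglAngel a X ∪ dglAngel b X
  | .seq a b, X => dglAngel a (dglAngel b X)
  | .dual a, X => (dglAngel a Xᶜ)ᶜ
  | .star a, X => ⋂₀ {Z | X ∪ dglAngel a Z ⊆ Z}

/-- Demon's one-argument zero-sum dGL winning region δ_α(X) = (ς_α(Xᶜ))ᶜ. -/
def dglDemon (g : Game V) (X : Set (V → ℝ)) : Set (V → ℝ) :=
  (dglAngel g Xᶜ)ᶜ

/-- Systematization α^{-d}: removes all dual operators. -/
def Game.sys : Game V → Game V
  | .assign x e => .assign x e
  | .ode x f Q => .ode x f Q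
  | .test Q => .test Q
  | .choice a b => .choice a.sys b.sys
  | .seq a b => .seq a.sys b.sys
  | .dual a => a.sys
  | .star a => .star a.sys

/-- Monotonicity of both semi-competitive winning regions in both arguments. -/
theorem game_mono (a : Game V) :
    ∀ ⦃X X' Y Y' : Set (V → ℝ)⦄, X ⊆ X' → Y ⊆ Y' →
      angel a X Y ⊆ angel a X' Y' ∧ demon a X Y ⊆ demon a X' Y' := by
  induction a with
  | assign x e =>
    intro X X' Y Y' hX hY
    exact ⟨fun ω h => hX h, fun ω h => hY h⟩
  | ode x f Q =>
    intro X X' Y Y' hX hY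
    constructor
    · rintro ω ⟨r, φ, hφ, h0, hr⟩
      exact ⟨r, φ, hφ, h0, hX hr⟩
    · rintro ω (h | ⟨r, φ, hφ, h0, s, hs, hX', hY'⟩)
      · exact Or.inl fun r φ hφ h0 s hs => hY (h r φ hφ h0 s hs)
      · exact Or.inr ⟨r, φ, hφ, h0, s, hs, hX hX', hY hY'⟩
  | test Q =>
    intro X X' Y Y' hX hY
    exact ⟨inter_subset_inter_right _ hX,
      union_subset_union_right _ hY⟩
  | choice a b iha ihb =>
    intro X X' Y Y' hX hY
    obtain ⟨ha1, ha2⟩ := iha hX hY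
    obtain ⟨hb1, hb2⟩ := ihb hX hY
    constructor
    · exact union_subset_union ha1 hb1
    · refine union_subset_union (union_subset_union ?_ ?_) ?_
      · exact inter_subset_inter ha2 hb2
      · exact inter_subset_inter ha2 ha1
      · exact inter_subset_inter hb2 hb1
  | seq a b iha ihb =>
    intro X X' Y Y' hX hY
    obtain ⟨hb1, hb2⟩ := ihb hX hY
    exact iha hb1 hb2
  | dual a ih =>
    intro X X' Y Y' hX hY
    exact ⟨(ih hY hX).2, (ih hY hX).1⟩
  | star a ih =>
    intro X X' Y Y' hX hY
    constructor
    · refine union_subset_union ?_ ?_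
      · exact sInter_subset_sInter fun Z hZ =>
          (union_subset_union_left _ hX).trans hZ
      · exact sInter_subset_sInter fun Z hZ =>
          (union_subset_union_left _ (inter_subset_inter hX hY)).trans hZ
    · refine union_subset_union ?_ ?_
      · exact sUnion_subset_sUnion fun Z hZ =>
          hZ.trans (inter_subset_inter_left _ hY)
      · exact sInter_subset_sInter fun Z hZ =>
          (union_subset_union_left _ (inter_subset_inter hX hY)).trans hZ

/-- Monotonicity of the one-argument dGL winning region. -/
theorem dglAngel_mono (g : Game V) :
    ∀ ⦃X X' : Set (V → ℝ)⦄, X ⊆ X' → dglAngel g X ⊆ dglAngel g X' := by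
  induction g with
  | assign x e => intro X X' hX ω h; exact hX h
  | ode x f Q =>
    rintro X X' hX ω ⟨r, φ, hφ, h0, hr⟩
    exact ⟨r, φ, hφ, h0, hX hr⟩
  | test Q => intro X X' hX; exact inter_subset_inter_right _ hX
  | choice a b iha ihb =>
    intro X X' hX; exact union_subset_union (iha hX) (ihb hX)
  | seq a b iha ihb => intro X X' hX; exact iha (ihb hX)
  | dual a ih =>
    intro X X' hX
    exact compl_subset_compl.2 (ih (compl_subset_compl.2 hX))
  | star a ih =>
    intro X X' hX
    exact sInter_subset_sInter fun Z hZ =>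
      (union_subset_union_left _ hX).trans hZ

/-- The least pre-fixed point construction is itself a pre-fixed point. -/
theorem dgl_prefix (g : Game V) (W : Set (V → ℝ)) :
    W ∪ dglAngel g (⋂₀ {Z | W ∪ dglAngel g Z ⊆ Z}) ⊆
      ⋂₀ {Z | W ∪ dglAngel g Z ⊆ Z} := by
  rintro ω (hω | hω) Z hZ
  · exact hZ (Or.inl hω)
  · exact hZ (Or.inr (dglAngel_mono g (sInter_subset_of_mem hZ) hω))

/-- Joint cooperation:
`ς_α(X,Y) ∩ δ_α(X,Y) = ς_{α^{-d}}(X ∩ Y)`. -/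
theorem joint_cooperation (α : Game V) (X Y : Set (V → ℝ)) :
    angel α X Y ∩ demon α X Y = dglAngel α.sys (X ∩ Y) := by
  induction α generalizing X Y with
  | assign x e =>
    ext ω; simp [angel, demon, dglAngel, Game.sys]
  | ode x f Q =>
    ext ω
    simp only [angel, demon, dglAngel, Game.sys, mem_inter_iff, mem_setOf_eq,
      mem_union]
    constructor
    · rintro ⟨⟨r, φ, hφ, h0, hX⟩, hd⟩
      rcases hd with h | ⟨r', φ', hφ', h0', s, hs, hX', hY'⟩
      · exact ⟨r, φ, hφ, h0, hX, h r φ hφ h0 r ⟨hφ.1, le_rfl⟩⟩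
      · refine ⟨s, φ', ⟨hs.1, ?_, ?_, ?_⟩, h0', hX', hY'⟩
        · exact fun t ht => hφ'.2.1 t ⟨ht.1, ht.2.trans hs.2⟩
        · exact fun t ht => hφ'.2.2.1 t ⟨ht.1, ht.2.trans hs.2⟩
        · exact fun t ht => hφ'.2.2.2 t ⟨ht.1, ht.2.trans hs.2⟩
    · rintro ⟨r, φ, hφ, h0, hX, hY⟩
      exact ⟨⟨r, φ, hφ, h0, hX⟩,
        Or.inr ⟨r, φ, hφ, h0, r, ⟨hφ.1, le_rfl⟩, hX, hY⟩⟩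
  | test Q =>
    ext ω; simp only [angel, demon, dglAngel, Game.sys, mem_inter_iff,
      mem_union, mem_compl_iff]
    tauto
  | choice a b iha ihb =>
    have : angel (Game.choice a b) X Y ∩ demon (Game.choice a b) X Y =
        (angel a X Y ∩ demon a X Y) ∪ (angel b X Y ∩ demon b X Y) := by
      simp only [angel, demon]
      ext ω
      simp only [mem_inter_iff, mem_union]
      tauto
    rw [this, iha, ihb]
    rfl
  | seq a b iha ihb =>
    show angel a _ _ ∩ demon a _ _ = dglAngel a.sys (dglAngel b.sys (X ∩ Y))
    rw [iha, ihb]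
  | dual a ih =>
    show demon a Y X ∩ angel a Y X = dglAngel a.sys (X ∩ Y)
    rw [inter_comm, ih, inter_comm Y X]
  | star a ih =>
    have hset : {Z : Set (V → ℝ) | X ∩ Y ∪ (angel a Z Z ∩ demon a Z Z) ⊆ Z} =
        {Z | X ∩ Y ∪ dglAngel a.sys Z ⊆ Z} := by
      ext Z
      rw [mem_setOf_eq, mem_setOf_eq, ih Z Z, inter_self]
    set C : Set (V → ℝ) := ⋂₀ {Z | X ∩ Y ∪ dglAngel a.sys Z ⊆ Z} with hC
    have hXYC : X ∩ Y ⊆ C := fun ω hω Z hZ => hZ (Or.inl hω)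
    have hCpre : dglAngel a.sys C ⊆ C := fun ω hω =>
      dgl_prefix a.sys (X ∩ Y) (Or.inr hω)
    have key : (⋂₀ {Z | X ∪ angel a Z Zᶜ ⊆ Z}) ∩
        (⋃₀ {Z | Z ⊆ Y ∩ demon a Zᶜ Z}) ⊆ C := by
      rintro ω ⟨hA, hB⟩
      obtain ⟨Z, hZ, hωZ⟩ := hB
      have hW : X ∪ angel a (Zᶜ ∪ C) (Zᶜ ∪ C)ᶜ ⊆ Zᶜ ∪ C := by
        rintro ω' (hx | hang)
        · by_cases hz : ω' ∈ Z
          · exact Or.inr (hXYC ⟨hx, (hZ hz).1⟩)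
          · exact Or.inl hz
        · by_cases hz : ω' ∈ Z
          · refine Or.inr ?_
            have h1 : ω' ∈ angel a (Zᶜ ∪ C) Z := by
              refine (game_mono a (le_refl (Zᶜ ∪ C)) ?_).1 hang
              rw [compl_union]
              exact (inter_subset_left).trans (by simp)
            have h2 : ω' ∈ demon a (Zᶜ ∪ C) Z :=
              (game_mono a (subset_union_left) (le_refl Z)).2 (hZ hz).2
            have h3 : ω' ∈ dglAngel a.sys ((Zᶜ ∪ C) ∩ Z) := by
              rw [← ih]; exact ⟨h1, h2⟩
            refine hCpre (dglAngel_mono a.sys ?_ h3)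
            rintro t ⟨ht1 | ht1, ht2⟩
            · exact absurd ht2 ht1
            · exact ht1
          · exact Or.inl hz
      have : ω ∈ Zᶜ ∪ C := hA _ hW
      rcases this with h | h
      · exact absurd hωZ h
      · exact h
    show (⋂₀ {Z | X ∪ angel a Z Zᶜ ⊆ Z} ∪
          ⋂₀ {Z : Set (V → ℝ) | X ∩ Y ∪ (angel a Z Z ∩ demon a Z Z) ⊆ Z}) ∩
        (⋃₀ {Z | Z ⊆ Y ∩ demon a Zᶜ Z} ∪
          ⋂₀ {Z : Set (V → ℝ) | X ∩ Y ∪ (angel a Z Z ∩ demon a Z Z) ⊆ Z}) =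
        ⋂₀ {Z | X ∩ Y ∪ dglAngel (Game.sys a) Z ⊆ Z}
    rw [hset]
    ext ω
    simp only [mem_inter_iff, mem_union]
    constructor
    · rintro ⟨hA | hc, hB | hc'⟩
      · exact key ⟨hA, hB⟩
      · exact hc'
      · exact hc
      · exact hc'
    · exact fun h => ⟨Or.inr h, Or.inr h⟩
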